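/- arXiv:2007.12338 — 4 statements merged into one kernel-verified Lean document; each statement's English description precedes it below -/
import Mathlib

section
/- Let f : ℝⁿ → ℝ be a measurable symmetric function, let 𝐅 = (F₁,…,Fₙ) and 𝐆 = (G₁,…,Gₙ) be n-tuples of Borel probability measures on ℝ, and let λ ∈ [0,1]. Then λ·D_f(𝐅) + (1−λ)·D_f(𝐆) ⊆ D_f(λ𝐅 + (1−λ)𝐆); that is, for every H ∈ D_f(𝐅) and K ∈ D_f(𝐆), the mixture measure λH + (1−λ)K belongs to D_f of the tuple whose i-th component is λFᵢ + (1−λ)Gᵢ. -/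
open MeasureTheory
open scoped ENNReal BigOperators

noncomputable section

/-- The `f`-aggregation set: laws of `f (X₁,…,Xₙ)` over all couplings with marginals `F`. -/
def aggSetF (n : ℕ) (f : (Fin n → ℝ) → ℝ) (F : Fin n → Measure ℝ) : Set (Measure ℝ) :=
  {H | ∃ μ : Measure (Fin n → ℝ), IsProbabilityMeasure μ ∧
    (∀ i, μ.map (fun x => x i) = F i) ∧ H = μ.map f}

/-- The aggregation set for sums. -/
def aggSet (n : ℕ) (F : Fin n → Measure ℝ) : Set (Measure ℝ) :=
  aggSetF n (fun x => ∑ i, x i) F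

/-- A symmetric function on `ℝⁿ`. -/
def IsSymmetricFn (n : ℕ) (f : (Fin n → ℝ) → ℝ) : Prop :=
  ∀ (π : Equiv.Perm (Fin n)) (x : Fin n → ℝ), f (x ∘ π) = f x

/-- Left-continuous quantile function of a measure on ℝ. -/
def quantile (F : Measure ℝ) (p : ℝ) : ℝ :=
  sInf {x : ℝ | p ≤ (F (Set.Iic x)).toReal}

/-- The uniform probability measure on (0,1). -/
def uniform01 : Measure ℝ := volume.restrict (Set.Ioo (0 : ℝ) 1)

/-- Comonotonic sum F₁ ⊕ ⋯ ⊕ Fₙ : the law of ∑ Fᵢ⁻¹(U), U uniform on (0,1). -/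
def comonoSum (n : ℕ) (F : Fin n → Measure ℝ) : Measure ℝ :=
  uniform01.map (fun u => ∑ i, quantile (F i) u)

/-- Convex order F ≺cx G. -/
def ConvexOrder (F G : Measure ℝ) : Prop :=
  ∀ φ : ℝ → ℝ, ConvexOn ℝ Set.univ φ → Integrable φ F → Integrable φ G →
    ∫ x, φ x ∂F ≤ ∫ x, φ x ∂G

/-- Stochastic order F ≺st G, i.e. F((-∞,x]) ≥ G((-∞,x]) for all x. -/
def StOrder (F G : Measure ℝ) : Prop :=
  ∀ x : ℝ, G (Set.Iic x) ≤ F (Set.Iic x)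

/-- Doubly stochastic matrix. -/
def DoublyStochastic {n : ℕ} (Λ : Matrix (Fin n) (Fin n) ℝ) : Prop :=
  (∀ i j, 0 ≤ Λ i j) ∧ (∀ i, ∑ j, Λ i j = 1) ∧ (∀ j, ∑ i, Λ i j = 1)

/-- Distribution mixture Λ𝐅 : i-th component is ∑ⱼ Λᵢⱼ Fⱼ. -/
def distMix {n : ℕ} (Λ : Matrix (Fin n) (Fin n) ℝ) (F : Fin n → Measure ℝ) :
    Fin n → Measure ℝ :=
  fun i => ∑ j, ENNReal.ofReal (Λ i j) • F j

/-- Quantile mixture Λ⊗𝐅 : i-th component is the law of ∑ⱼ Λᵢⱼ Fⱼ⁻¹(U). -/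
def quantileMix {n : ℕ} (Λ : Matrix (Fin n) (Fin n) ℝ) (F : Fin n → Measure ℝ) :
    Fin n → Measure ℝ :=
  fun i => uniform01.map (fun u => ∑ j, Λ i j * quantile (F j) u)

/-- Worst-case value of a risk measure over the aggregation set, valued in EReal. -/
def worstCase (ρ : Measure ℝ → ℝ) (n : ℕ) (F : Fin n → Measure ℝ) : EReal :=
  sSup ((fun H => ((ρ H : ℝ) : EReal)) '' aggSet n F)

/-- Worst-case Value-at-Risk over the aggregation set, valued in EReal. -/
def worstVaR (p : ℝ) (n : ℕ) (F : Fin n → Measure ℝ) : EReal :=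
  sSup ((fun G => ((quantile G p : ℝ) : EReal)) '' aggSet n F)

/-- The class M_D of distributions with a nonincreasing density on an interval support. -/
def MemMD (F : Measure ℝ) : Prop :=
  ∃ f : ℝ → ℝ, Measurable f ∧ (∀ x, 0 ≤ f x) ∧
    F = volume.withDensity (fun x => ENNReal.ofReal (f x)) ∧
    ∃ s : Set ℝ, s.OrdConnected ∧ (∀ x, x ∉ s → f x = 0) ∧
      (∀ x ∈ s, ∀ y ∈ s, x ≤ y → f y ≤ f x)

/-- The class M_I of distributions with a nondecreasing density on an interval support. -/
def MemMI (F : Measure ℝ) : Prop :=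
  ∃ f : ℝ → ℝ, Measurable f ∧ (∀ x, 0 ≤ f x) ∧
    F = volume.withDensity (fun x => ENNReal.ofReal (f x)) ∧
    ∃ s : Set ℝ, s.OrdConnected ∧ (∀ x, x ∉ s → f x = 0) ∧
      (∀ x ∈ s, ∀ y ∈ s, x ≤ y → f x ≤ f y)

/-- Pareto(α, θ) distribution, via its Lebesgue density α θ^α x^{-(α+1)} on [θ, ∞). -/
def pareto (α θ : ℝ) : Measure ℝ :=
  volume.withDensity
    (fun x => if θ ≤ x then ENNReal.ofReal (α * θ ^ α / x ^ (α + 1)) else 0)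

/-- A monotone risk measure (w.r.t. stochastic order, on probability measures). -/
def MonotoneRisk (ρ : Measure ℝ → ℝ) : Prop :=
  ∀ F G : Measure ℝ, IsProbabilityMeasure F → IsProbabilityMeasure G →
    StOrder F G → ρ F ≤ ρ G

/-- A risk measure consistent with convex order (on finite-mean probability measures). -/
def CxConsistentRisk (ρ : Measure ℝ → ℝ) : Prop :=
  ∀ F G : Measure ℝ, IsProbabilityMeasure F → IsProbabilityMeasure G →
    Integrable id F → Integrable id G → ConvexOrder F G → ρ F ≤ ρ G

/-- Uniform distribution on [a,b]. -/
def unifOn (a b : ℝ) : Measure ℝ :=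
  (ENNReal.ofReal (b - a))⁻¹ • volume.restrict (Set.Icc a b)

/-- Bernoulli distribution with parameter p, as a measure on ℝ. -/
def bern (p : ℝ) : Measure ℝ :=
  ENNReal.ofReal (1 - p) • Measure.dirac (0 : ℝ) + ENNReal.ofReal p • Measure.dirac (1 : ℝ)

/-- The set C(𝐅) of finite-mean distributions dominated by the comonotonic sum in convex order. -/
def CSet (n : ℕ) (F : Fin n → Measure ℝ) : Set (Measure ℝ) :=
  {G | IsProbabilityMeasure G ∧ Integrable id G ∧ ConvexOrder G (comonoSum n F)}

/-! The mixture of the two couplings is a coupling of the mixed marginals, and pushing it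
forward along `f` gives the mixture of the two aggregate laws, because `Measure.map` along a
measurable map is linear. -/

theorem isProbabilityMeasure_smul_add_smul {α : Type*} [MeasurableSpace α]
    (μ ν : Measure α) [IsProbabilityMeasure μ] [IsProbabilityMeasure ν]
    {a b : ℝ≥0∞} (hab : a + b = 1) : IsProbabilityMeasure (a • μ + b • ν) :=
  ⟨by simp [hab]⟩

theorem smul_add_smul_mem_aggSetF {n : ℕ} {f : (Fin n → ℝ) → ℝ} (hf : Measurable f)
    {F G : Fin n → Measure ℝ} {H K : Measure ℝ} (hH : H ∈ aggSetF n f F)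
    (hK : K ∈ aggSetF n f G) {a b : ℝ≥0∞} (hab : a + b = 1) :
    a • H + b • K ∈ aggSetF n f (fun i => a • F i + b • G i) := by
  obtain ⟨μ, hμ, hμF, rfl⟩ := hH
  obtain ⟨ν, hν, hνG, rfl⟩ := hK
  refine ⟨a • μ + b • ν, isProbabilityMeasure_smul_add_smul μ ν hab, fun i => ?_, ?_⟩
  · rw [Measure.map_add _ _ (measurable_pi_apply i), Measure.map_smul, Measure.map_smul,
      hμF, hνG]
  · rw [Measure.map_add _ _ hf, Measure.map_smul, Measure.map_smul]

theorem stmt0_general (n : ℕ) (f : (Fin n → ℝ) → ℝ) (hf : Measurable f)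
    (F G : Fin n → Measure ℝ)
    (lam : ℝ) (hlam0 : 0 ≤ lam) (hlam1 : lam ≤ 1)
    (H K : Measure ℝ) (hH : H ∈ aggSetF n f F) (hK : K ∈ aggSetF n f G) :
    ENNReal.ofReal lam • H + ENNReal.ofReal (1 - lam) • K ∈
      aggSetF n f (fun i => ENNReal.ofReal lam • F i + ENNReal.ofReal (1 - lam) • G i) := by
  refine smul_add_smul_mem_aggSetF hf hH hK ?_
  rw [← ENNReal.ofReal_add hlam0 (sub_nonneg.mpr hlam1), add_sub_cancel, ENNReal.ofReal_one]

/-- Mixture stability of f-aggregation sets (Lemma 2.1(ii)). -/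
theorem stmt0 (n : ℕ) (f : (Fin n → ℝ) → ℝ) (hf : Measurable f)
    (hsym : IsSymmetricFn n f)
    (F G : Fin n → Measure ℝ)
    (hF : ∀ i, IsProbabilityMeasure (F i)) (hG : ∀ i, IsProbabilityMeasure (G i))
    (lam : ℝ) (hlam0 : 0 ≤ lam) (hlam1 : lam ≤ 1)
    (H K : Measure ℝ) (hH : H ∈ aggSetF n f F) (hK : K ∈ aggSetF n f G) :
    ENNReal.ofReal lam • H + ENNReal.ofReal (1 - lam) • K ∈
      aggSetF n f (fun i => ENNReal.ofReal lam • F i + ENNReal.ofReal (1 - lam) • G i) :=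
  stmt0_general n f hf F G lam hlam0 hlam1 H K hH hK

end
end

section
/- Let f : ℝⁿ → ℝ be a measurable symmetric function, let 𝐅 = (F₁,…,Fₙ) be an n-tuple of Borel probability measures on ℝ, and let Λ be an n×n doubly stochastic matrix. Then D_f(𝐅) ⊆ D_f(Λ𝐅). In particular, for the sum function f(x₁,…,xₙ) = x₁+⋯+xₙ, the aggregation set satisfies Dₙ(𝐅) ⊆ Dₙ(Λ𝐅). -/
open MeasureTheory
open scoped ENNReal BigOperators

noncomputable section

/-! By Birkhoff's theorem a doubly stochastic `Λ` is a convex combination `∑ σ, w σ • P_σ` of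
permutation matrices. If `μ` has marginals `𝐅`, the mixture with weights `w σ` of the laws of
`x ∘ σ` under `μ` has `i`-th marginal `∑ σ, w σ F_{σ i} = ∑ j, Λᵢⱼ Fⱼ`, while symmetry of `f` makes
every component of the mixture push forward to `μ.map f`. -/

open Equiv

section PermMixture

variable {ι α : Type*} [MeasurableSpace α]

lemma measurable_comp_perm (σ : Perm ι) : Measurable fun x : ι → α => x ∘ σ := by
  fun_prop

lemma sum_ofReal_smul_eq_self {κ M : Type*} [Fintype κ] [AddCommMonoid M] [Module ℝ≥0∞ M]
    {w : κ → ℝ} (hw0 : ∀ k, 0 ≤ w k) (hw1 : ∑ k, w k = 1) (m : M) :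
    ∑ k, ENNReal.ofReal (w k) • m = m := by
  rw [← Finset.sum_smul, ← ENNReal.ofReal_sum_of_nonneg fun k _ => hw0 k, hw1,
    ENNReal.ofReal_one, one_smul]

variable [Fintype ι] [DecidableEq ι]

def permMixture (w : Perm ι → ℝ) (μ : Measure (ι → α)) : Measure (ι → α) :=
  ∑ σ, ENNReal.ofReal (w σ) • μ.map (fun x => x ∘ σ)

variable {w : Perm ι → ℝ} (μ : Measure (ι → α))

lemma isProbabilityMeasure_permMixture [IsProbabilityMeasure μ]
    (hw0 : ∀ σ, 0 ≤ w σ) (hw1 : ∑ σ, w σ = 1) :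
    IsProbabilityMeasure (permMixture w μ) := by
  constructor
  simp only [permMixture, Measure.finsetSum_apply, Measure.smul_apply,
    Measure.map_apply (measurable_comp_perm _) MeasurableSet.univ, Set.preimage_univ,
    measure_univ]
  exact sum_ofReal_smul_eq_self hw0 hw1 1

lemma map_permMixture {β : Type*} [MeasurableSpace β] {f : (ι → α) → β}
    (hf : Measurable f) :
    (permMixture w μ).map f = ∑ σ, ENNReal.ofReal (w σ) • μ.map (f ∘ fun x => x ∘ σ) := by
  simp only [permMixture, Measure.map_finset_sum' hf.aemeasurable, Measure.map_smul,
    Measure.map_map hf (measurable_comp_perm _)]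

lemma map_eval_permMixture (i : ι) :
    (permMixture w μ).map (fun x => x i) = ∑ σ, ENNReal.ofReal (w σ) • μ.map (fun x => x (σ i)) :=
  map_permMixture μ (measurable_pi_apply i)

lemma map_permMixture_eq_of_perm_invariant {β : Type*} [MeasurableSpace β] {f : (ι → α) → β}
    (hf : Measurable f) (hsym : ∀ (σ : Perm ι) x, f (x ∘ σ) = f x)
    (hw0 : ∀ σ, 0 ≤ w σ) (hw1 : ∑ σ, w σ = 1) :
    (permMixture w μ).map f = μ.map f := by
  have hf_comp (σ : Perm ι) : f ∘ (fun x => x ∘ σ) = f := funext (hsym σ)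
  simp only [map_permMixture μ hf, hf_comp]
  exact sum_ofReal_smul_eq_self hw0 hw1 _

end PermMixture

lemma permMatrix_sum_apply {ι : Type*} [Fintype ι] [DecidableEq ι] (w : Perm ι → ℝ) (i j : ι) :
    (∑ σ, w σ • σ.permMatrix ℝ) i j = ∑ σ, if σ i = j then w σ else 0 := by
  simp [Matrix.sum_apply, Perm.permMatrix, PEquiv.toMatrix_apply, Equiv.toPEquiv_apply]

lemma sum_ofReal_smul_eq_sum_perm {ι M : Type*} [Fintype ι] [DecidableEq ι] [AddCommMonoid M]
    [Module ℝ≥0∞ M] {Λ : Matrix ι ι ℝ} {w : Perm ι → ℝ} (hw0 : ∀ σ, 0 ≤ w σ)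
    (hΛ : ∑ σ, w σ • σ.permMatrix ℝ = Λ) (ν : ι → M) (i : ι) :
    ∑ j, ENNReal.ofReal (Λ i j) • ν j = ∑ σ, ENNReal.ofReal (w σ) • ν (σ i) := by
  have hΛij (j : ι) :
      ENNReal.ofReal (Λ i j) = ∑ σ, if σ i = j then ENNReal.ofReal (w σ) else 0 := by
    rw [← hΛ, permMatrix_sum_apply,
      ENNReal.ofReal_sum_of_nonneg fun σ _ => by split_ifs <;> simp [hw0]]
    simp only [apply_ite ENNReal.ofReal, ENNReal.ofReal_zero]
  simp only [hΛij, Finset.sum_smul, ite_smul, zero_smul]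
  rw [Finset.sum_comm]
  simp only [Finset.sum_ite_eq, Finset.mem_univ, if_true]

theorem aggSetF_subset_aggSetF_distMix {n : ℕ} {f : (Fin n → ℝ) → ℝ} (hf : Measurable f)
    (hsym : IsSymmetricFn n f) (F : Fin n → Measure ℝ) {Λ : Matrix (Fin n) (Fin n) ℝ}
    (hΛ : DoublyStochastic Λ) :
    aggSetF n f F ⊆ aggSetF n f (distMix Λ F) := by
  obtain ⟨w, hw0, hw1, hwΛ⟩ := exists_eq_sum_perm_of_mem_doublyStochastic
    (mem_doublyStochastic_iff_sum.2 hΛ)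
  rintro _ ⟨μ, hμ, hμF, rfl⟩
  refine ⟨permMixture w μ, isProbabilityMeasure_permMixture μ hw0 hw1, fun i => ?_,
    (map_permMixture_eq_of_perm_invariant μ hf hsym hw0 hw1).symm⟩
  simp only [map_eval_permMixture, distMix, hμF, sum_ofReal_smul_eq_sum_perm hw0 hwΛ]

lemma isSymmetricFn_sum (n : ℕ) : IsSymmetricFn n fun x => ∑ i, x i :=
  fun π x => Equiv.sum_comp π x

theorem stmt1_general (n : ℕ) (f : (Fin n → ℝ) → ℝ) (hf : Measurable f)
    (hsym : IsSymmetricFn n f)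
    (F : Fin n → Measure ℝ)
    (Λ : Matrix (Fin n) (Fin n) ℝ) (hΛ : DoublyStochastic Λ) :
    aggSetF n f F ⊆ aggSetF n f (distMix Λ F) ∧
      aggSet n F ⊆ aggSet n (distMix Λ F) :=
  ⟨aggSetF_subset_aggSetF_distMix hf hsym F hΛ,
    aggSetF_subset_aggSetF_distMix (by fun_prop) (isSymmetricFn_sum n) F hΛ⟩

/-- Theorem 2.1: D_f(𝐅) ⊆ D_f(Λ𝐅), in particular Dₙ(𝐅) ⊆ Dₙ(Λ𝐅). -/
theorem stmt1 (n : ℕ) (f : (Fin n → ℝ) → ℝ) (hf : Measurable f)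
    (hsym : IsSymmetricFn n f)
    (F : Fin n → Measure ℝ) (hF : ∀ i, IsProbabilityMeasure (F i))
    (Λ : Matrix (Fin n) (Fin n) ℝ) (hΛ : DoublyStochastic Λ) :
    aggSetF n f F ⊆ aggSetF n f (distMix Λ F) ∧
      aggSet n F ⊆ aggSet n (distMix Λ F) :=
  stmt1_general n f hf hsym F Λ hΛ

end
end

section
/- Let 𝐅 = (F₁,…,Fₙ) be an n-tuple of Borel probability measures on ℝ, each with finite first moment, and let Λ be an n×n doubly stochastic matrix. Then C(𝐅) ⊆ C(Λ𝐅); that is, every finite-mean probability measure G on ℝ with G ≺_cx F₁⊕⋯⊕Fₙ also satisfies G ≺_cx (Λ𝐅)₁⊕⋯⊕(Λ𝐅)ₙ. -/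
open MeasureTheory
open scoped ENNReal BigOperators

noncomputable section

open Set Filter Topology ProbabilityTheory

/-!
Let `S u = ∑ᵢ Fᵢ⁻¹(u)` and `T u = ∑ᵢ (Λ𝐅)ᵢ⁻¹(u)` on `(0, 1)`, so that the two comonotonic sums are
the laws of `S` and `T` under the uniform distribution. They have the same mean, and
`∫ₚ¹ S ≤ ∫ₚ¹ T` for every `p`: by the Rockafellar–Uryasev formula
`∫ₚ¹ K⁻¹ = min_x ((1 - p) x + ∫ (t - x)⁺ dK)` the tail integral of a quantile function is concave
along mixtures, and the columns of `Λ` sum to one.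

For a convex Lipschitz `σ` with right derivative `σ'`, `σ (T u) - σ (S u) ≥ σ' (S u) (T u - S u)`,
and `u ↦ σ' (S u)` is bounded and nondecreasing; slicing it into its upper level sets turns
`∫ σ' (S u) (T u - S u) du ≥ 0` into the tail inequalities. So the law of `S`, and hence `G`, is
below the law of `T` against Lipschitz convex test functions. A general convex `φ` is the increasing
limit of maxima of its support lines at a dense sequence of points, which are Lipschitz, and
monotone convergence on `G` concludes.
-/

instance isProbabilityMeasure_uniform01 : IsProbabilityMeasure uniform01 :=
  ⟨by simp [uniform01]⟩

section Quantile

variable {F : Measure ℝ} [IsProbabilityMeasure F]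

lemma quantile_eq_sInf_cdf (p : ℝ) : quantile F p = sInf {x | p ≤ cdf F x} := by
  simp only [quantile, cdf_eq_real, measureReal_def]

lemma quantile_le_iff {p x : ℝ} (hp : p ∈ Ioo 0 1) : quantile F p ≤ x ↔ p ≤ cdf F x := by
  set A := {x | p ≤ cdf F x}
  have hne : A.Nonempty := (tendsto_cdf_atTop F |>.eventually_const_le hp.2).exists
  have hbdd : BddBelow A := by
    obtain ⟨a, ha⟩ := (tendsto_cdf_atBot F |>.eventually_lt_const hp.1).exists_forall_of_atBot
    exact ⟨a, fun y hy => le_of_not_gt fun hya => (ha y hya.le).not_ge hy⟩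
  have hA : ∀ y ∈ A, ∀ z, y ≤ z → z ∈ A := fun y hy z hyz => hy.trans (monotone_cdf F hyz)
  rw [quantile_eq_sInf_cdf]
  refine ⟨fun h => hA _ ?_ x h, fun h => csInf_le hbdd h⟩
  -- right-continuity of the cdf puts the infimum in `A`
  refine ge_of_tendsto (((cdf F).right_continuous _).mono Ioi_subset_Ici_self)
    (eventually_nhdsWithin_of_forall fun z hz => ?_)
  obtain ⟨y, hy, hyz⟩ := exists_lt_of_csInf_lt hne hz
  exact hA y hy z hyz.le

lemma monotoneOn_quantile : MonotoneOn (quantile F) (Ioo 0 1) := fun _ hp _ hq hpq =>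
  (quantile_le_iff hp).2 (hpq.trans ((quantile_le_iff hq).1 le_rfl))

lemma aemeasurable_quantile : AEMeasurable (quantile F) uniform01 :=
  aemeasurable_restrict_of_monotoneOn measurableSet_Ioo monotoneOn_quantile

lemma map_quantile_uniform01 : uniform01.map (quantile F) = F := by
  refine Measure.ext_of_Iic _ _ fun x => ?_
  have hpre : quantile F ⁻¹' Iic x ∩ Ioo 0 1 = Ioo 0 1 ∩ Iic (cdf F x) := by
    ext u
    simp only [mem_inter_iff, mem_preimage, mem_Iic]
    exact ⟨fun h => ⟨h.2, (quantile_le_iff h.2).1 h.1⟩, fun h => ⟨(quantile_le_iff h.1).2 h.2, h.1⟩⟩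
  rw [Measure.map_apply_of_aemeasurable aemeasurable_quantile measurableSet_Iic, uniform01,
    Measure.restrict_apply' measurableSet_Ioo, hpre,
    measure_congr ((Ioo_ae_eq_Ioc (μ := volume)).inter (EventuallyEq.refl _ (Iic (cdf F x)))),
    Ioc_inter_Iic, min_eq_right (cdf_le_one F x), Real.volume_Ioc, sub_zero, ofReal_cdf]

lemma integral_comp_quantile {f : ℝ → ℝ} (hf : AEStronglyMeasurable f F) :
    ∫ u, f (quantile F u) ∂uniform01 = ∫ x, f x ∂F := by
  rw [← integral_map aemeasurable_quantile ((map_quantile_uniform01 (F := F)).symm ▸ hf),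
    map_quantile_uniform01]

lemma setIntegral_Ioo_zero_one_quantile : ∫ u in Ioo 0 1, quantile F u = ∫ x, x ∂F :=
  integral_comp_quantile (f := id) aestronglyMeasurable_id

lemma integrable_comp_quantile {f : ℝ → ℝ} (hf : Integrable f F) :
    Integrable (fun u => f (quantile F u)) uniform01 := by
  rw [← map_quantile_uniform01 (F := F)] at hf
  exact hf.comp_aemeasurable aemeasurable_quantile

end Quantile

section TailIntegral

variable {K : Measure ℝ} [IsProbabilityMeasure K]

lemma integrableOn_quantile (hK : Integrable id K) : IntegrableOn (quantile K) (Ioo 0 1) :=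
  integrable_comp_quantile hK

lemma integrable_max_sub (hK : Integrable id K) (x : ℝ) : Integrable (fun t => max (t - x) 0) K :=
  (hK.sub (integrable_const x)).pos_part

lemma setIntegral_Ioo_zero_one_max_quantile_sub (x : ℝ) :
    ∫ u in Ioo 0 1, max (quantile K u - x) 0 = ∫ t, max (t - x) 0 ∂K :=
  integral_comp_quantile (f := fun t => max (t - x) 0) (by fun_prop)

lemma setIntegral_Ioo_quantile_le (hK : Integrable id K) {p : ℝ} (hp : p ∈ Icc 0 1) (x : ℝ) :
    ∫ u in Ioo p 1, quantile K u ≤ (1 - p) * x + ∫ t, max (t - x) 0 ∂K := by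
  have hsub : Ioo p 1 ⊆ Ioo 0 1 := Ioo_subset_Ioo_left hp.1
  have hc : IntegrableOn (fun u => max (quantile K u - x) 0) (Ioo 0 1) :=
    integrable_comp_quantile (integrable_max_sub hK x)
  calc ∫ u in Ioo p 1, quantile K u
      ≤ ∫ u in Ioo p 1, (x + max (quantile K u - x) 0) :=
        integral_mono ((integrableOn_quantile hK).mono_set hsub)
          ((integrable_const x).add (hc.mono_set hsub)) fun u => by
            dsimp only; linarith [le_max_left (quantile K u - x) 0]
    _ = (1 - p) * x + ∫ u in Ioo p 1, max (quantile K u - x) 0 := by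
        rw [integral_add (integrable_const x) (hc.mono_set hsub), setIntegral_const,
          Real.volume_real_Ioo_of_le hp.2, smul_eq_mul]
    _ ≤ (1 - p) * x + ∫ u in Ioo 0 1, max (quantile K u - x) 0 :=
        (add_le_add_iff_left _).2 (setIntegral_mono_set hc (ae_of_all _ fun _ => le_max_right _ _)
          hsub.eventuallyLE)
    _ = (1 - p) * x + ∫ t, max (t - x) 0 ∂K := by
        rw [setIntegral_Ioo_zero_one_max_quantile_sub]

lemma setIntegral_Ioo_quantile_eq (hK : Integrable id K) {p : ℝ} (hp : p ∈ Ioo 0 1) :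
    ∫ u in Ioo p 1, quantile K u =
      (1 - p) * quantile K p + ∫ t, max (t - quantile K p) 0 ∂K := by
  set x := quantile K p
  have hsub : Ioo p 1 ⊆ Ioo 0 1 := Ioo_subset_Ioo_left hp.1.le
  have hcall : ∫ t, max (t - x) 0 ∂K = ∫ u in Ioo p 1, (quantile K u - x) := by
    rw [← setIntegral_Ioo_zero_one_max_quantile_sub,
      setIntegral_eq_of_subset_of_forall_sdiff_eq_zero measurableSet_Ioo hsub fun u hu => ?_]
    · refine setIntegral_congr_fun measurableSet_Ioo fun u hu => max_eq_left (sub_nonneg.2 ?_)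
      exact monotoneOn_quantile hp (hsub hu) hu.1.le
    · refine max_eq_right (sub_nonpos.2 (monotoneOn_quantile hu.1 hp ?_))
      exact not_lt.1 fun h => hu.2 ⟨h, hu.1.2⟩
  rw [hcall, integral_sub ((integrableOn_quantile hK).mono_set hsub) (integrable_const x),
    setIntegral_const, Real.volume_real_Ioo_of_le hp.2.le, smul_eq_mul]
  ring

end TailIntegral

section Mixture

variable {ι : Type*} [Fintype ι] {w : ι → ℝ} {F : ι → Measure ℝ}

lemma isProbabilityMeasure_sum_smul (hw0 : ∀ j, 0 ≤ w j) (hw1 : ∑ j, w j = 1)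
    (hF : ∀ j, IsProbabilityMeasure (F j)) :
    IsProbabilityMeasure (∑ j, ENNReal.ofReal (w j) • F j) := by
  constructor
  simp [Measure.finsetSum_apply, ← ENNReal.ofReal_sum_of_nonneg fun j _ => hw0 j, hw1]

lemma integrable_sum_smul {f : ℝ → ℝ} (hf : ∀ j, Integrable f (F j)) :
    Integrable f (∑ j, ENNReal.ofReal (w j) • F j) :=
  integrable_finsetSum_measure.2 fun j _ => (hf j).smul_measure ENNReal.ofReal_ne_top

lemma integral_sum_smul (hw0 : ∀ j, 0 ≤ w j) {f : ℝ → ℝ} (hf : ∀ j, Integrable f (F j)) :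
    ∫ x, f x ∂(∑ j, ENNReal.ofReal (w j) • F j) = ∑ j, w j * ∫ x, f x ∂(F j) := by
  rw [integral_finsetSum_measure fun j _ => (hf j).smul_measure ENNReal.ofReal_ne_top]
  simp [integral_smul_measure, ENNReal.toReal_ofReal (hw0 _)]

lemma sum_mul_setIntegral_Ioo_quantile_le (hw0 : ∀ j, 0 ≤ w j) (hw1 : ∑ j, w j = 1)
    (hF : ∀ j, IsProbabilityMeasure (F j)) (hFint : ∀ j, Integrable id (F j)) {p : ℝ}
    (hp : p ∈ Ioo 0 1) :
    ∑ j, w j * ∫ u in Ioo p 1, quantile (F j) u ≤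
      ∫ u in Ioo p 1, quantile (∑ j, ENNReal.ofReal (w j) • F j) u := by
  set M := ∑ j, ENNReal.ofReal (w j) • F j
  have := isProbabilityMeasure_sum_smul hw0 hw1 hF
  set x := quantile M p
  calc ∑ j, w j * ∫ u in Ioo p 1, quantile (F j) u
      ≤ ∑ j, w j * ((1 - p) * x + ∫ t, max (t - x) 0 ∂(F j)) :=
        Finset.sum_le_sum fun j _ => by
          have := hF j
          exact mul_le_mul_of_nonneg_left
            (setIntegral_Ioo_quantile_le (hFint j) (Ioo_subset_Icc_self hp) x) (hw0 j)
    _ = (1 - p) * x + ∑ j, w j * ∫ t, max (t - x) 0 ∂(F j) := by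
        simp only [mul_add, Finset.sum_add_distrib, ← Finset.sum_mul, hw1, one_mul]
    _ = (1 - p) * x + ∫ t, max (t - x) 0 ∂M := by
        rw [integral_sum_smul hw0 fun j => by have := hF j; exact integrable_max_sub (hFint j) x]
    _ = ∫ u in Ioo p 1, quantile M u :=
        (setIntegral_Ioo_quantile_eq (integrable_sum_smul hFint) hp).symm

end Mixture

lemma LipschitzWith.integrable_comp {α : Type*} [MeasurableSpace α] {μ : Measure α}
    [IsFiniteMeasure μ] {σ : ℝ → ℝ} {C : NNReal} (hσ : LipschitzWith C σ) {f : α → ℝ}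
    (hf : Integrable f μ) : Integrable (fun a => σ (f a)) μ := by
  refine ((hf.norm.const_mul C).add (integrable_const ‖σ 0‖)).mono'
    (hσ.continuous.comp_aestronglyMeasurable hf.1) (ae_of_all _ fun a => ?_)
  have := hσ.dist_le_mul (f a) 0
  rw [dist_eq_norm, dist_eq_norm, sub_zero] at this
  simp only [Pi.add_apply]
  linarith [norm_le_norm_sub_add (σ (f a)) (σ 0)]

section SupportLine

variable {φ : ℝ → ℝ}

lemma ConvexOn.add_rightDeriv_mul_sub_le (hφ : ConvexOn ℝ univ φ) (x y : ℝ) :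
    φ x + derivWithin φ (Ioi x) x * (y - x) ≤ φ y := by
  have hx : x ∈ interior univ := by simp
  rcases lt_trichotomy y x with hyx | rfl | hxy
  · have h := (hφ.slope_le_leftDeriv_of_mem_interior (mem_univ y) hx hyx).trans
      (hφ.leftDeriv_le_rightDeriv_of_mem_interior hx)
    rw [slope_def_field, div_le_iff₀ (sub_pos.2 hyx)] at h
    linarith
  · simp
  · have h := hφ.rightDeriv_le_slope_of_mem_interior hx (mem_univ y) hxy
    rw [slope_def_field, le_div_iff₀ (sub_pos.2 hxy)] at h
    linarith

lemma ConvexOn.abs_rightDeriv_le (hφ : ConvexOn ℝ univ φ) {C : NNReal} (hC : LipschitzWith C φ)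
    (x : ℝ) : |derivWithin φ (Ioi x) x| ≤ C := by
  have hr := hφ.add_rightDeriv_mul_sub_le x (x + 1)
  have hl := hφ.add_rightDeriv_mul_sub_le x (x - 1)
  have hCr := hC.dist_le_mul (x + 1) x
  have hCl := hC.dist_le_mul (x - 1) x
  simp only [Real.dist_eq, add_sub_cancel_left, sub_sub_cancel_left, abs_neg, abs_one,
    mul_one, mul_neg] at hr hl hCr hCl
  rw [abs_le]
  constructor <;> linarith [le_abs_self (φ (x + 1) - φ x), le_abs_self (φ (x - 1) - φ x)]

end SupportLine

section Majorization

lemma ae_eq_Ioo_sInf {A : Set ℝ} {b : ℝ} (hA : A ⊆ Iio b) (hbdd : BddBelow A) (hne : A.Nonempty)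
    (hup : ∀ a ∈ A, ∀ c, a ≤ c → c < b → c ∈ A) : A =ᵐ[volume] Ioo (sInf A) b := by
  have hIco : A ⊆ Ico (sInf A) b := fun a ha => ⟨csInf_le hbdd ha, hA ha⟩
  have hIoo : Ioo (sInf A) b ⊆ A := fun c hc => by
    obtain ⟨a, ha, hac⟩ := exists_lt_of_csInf_lt hne hc.1
    exact hup a ha c hac.le hc.2
  exact hIco.eventuallyLE.trans Ioo_ae_eq_Ico.symm.le |>.antisymm hIoo.eventuallyLE

variable {h : ℝ → ℝ}

lemma setIntegral_nonneg_of_upwardClosed {A : Set ℝ} (hA : A ⊆ Ioo 0 1)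
    (hup : ∀ a ∈ A, ∀ c, a ≤ c → c < 1 → c ∈ A)
    (htail : ∀ p ∈ Ico (0 : ℝ) 1, 0 ≤ ∫ u in Ioo p 1, h u) : 0 ≤ ∫ u in A, h u := by
  rcases A.eq_empty_or_nonempty with rfl | hne
  · simp
  have hbdd : BddBelow A := ⟨0, fun a ha => (hA ha).1.le⟩
  rw [setIntegral_congr_set (ae_eq_Ioo_sInf (fun a ha => (hA ha).2) hbdd hne hup)]
  obtain ⟨a, ha⟩ := hne
  exact htail _ ⟨le_csInf ⟨a, ha⟩ fun a ha => (hA ha).1.le, (csInf_le hbdd ha).trans_lt (hA ha).2⟩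

lemma setIntegral_indicator_lt_nonneg_of_monotoneOn {D : ℝ → ℝ} (hD : MonotoneOn D (Ioo 0 1))
    (htail : ∀ p ∈ Ico (0 : ℝ) 1, 0 ≤ ∫ u in Ioo p 1, h u) (t : ℝ) :
    0 ≤ ∫ u in Ioo 0 1, {u | t < D u}.indicator h u := by
  set A := {u | u ∈ Ioo (0 : ℝ) 1 ∧ t < D u}
  have hup : ∀ a ∈ A, ∀ c, a ≤ c → c < 1 → c ∈ A := fun a ha c hac hc =>
    ⟨⟨ha.1.1.trans_le hac, hc⟩, ha.2.trans_le (hD ha.1 ⟨ha.1.1.trans_le hac, hc⟩ hac)⟩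
  have hA : MeasurableSet A :=
    Set.OrdConnected.measurableSet ⟨fun a ha c hc u hu => hup a ha u hu.1 (hu.2.trans_lt hc.1.2)⟩
  have hAsub : A ⊆ Ioo 0 1 := fun u hu => hu.1
  calc (0 : ℝ) ≤ ∫ u in A, h u := setIntegral_nonneg_of_upwardClosed hAsub hup htail
    _ = ∫ u in Ioo 0 1, {u | t < D u}.indicator h u := by
        rw [← inter_eq_right.2 hAsub, ← setIntegral_indicator hA]
        refine setIntegral_congr_fun measurableSet_Ioo fun u hu => ?_
        simp [A, indicator_apply, hu.1, hu.2]

/-- Layer-cake form of Abel summation: writing `D u + L = ∫_{-L}^{L} 1[t < D u] dt`, the integral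
becomes an average over `t` of integrals of `h` over upper sets of `(0, 1)`. -/
lemma setIntegral_mul_nonneg_of_monotoneOn {D : ℝ → ℝ} {L : ℝ} (hD : MonotoneOn D (Ioo 0 1))
    (hDL : ∀ u ∈ Ioo (0 : ℝ) 1, |D u| ≤ L) (hh : IntegrableOn h (Ioo 0 1))
    (hmean : ∫ u in Ioo 0 1, h u = 0) (htail : ∀ p ∈ Ico (0 : ℝ) 1, 0 ≤ ∫ u in Ioo p 1, h u) :
    0 ≤ ∫ u in Ioo 0 1, D u * h u := by
  set g : ℝ × ℝ → ℝ := {q | q.1 < D q.2}.indicator fun q => h q.2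
  have hDm : AEMeasurable D (volume.restrict (Ioo 0 1)) :=
    aemeasurable_restrict_of_monotoneOn measurableSet_Ioo hD
  have hg : Integrable g ((volume.restrict (Ioo (-L) L)).prod (volume.restrict (Ioo 0 1))) :=
    (hh.comp_snd _).indicator₀ (nullMeasurableSet_lt measurable_fst.aemeasurable
      (hDm.comp_quasiMeasurePreserving Measure.quasiMeasurePreserving_snd))
  have hlayer : ∀ u ∈ Ioo (0 : ℝ) 1, (∫ t in Ioo (-L) L, g (t, u)) - L * h u = D u * h u := by
    intro u hu
    have hDu := abs_le.1 (hDL u hu)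
    change (∫ t in Ioo (-L) L, (Iio (D u)).indicator (fun _ => h u) t) - L * h u = _
    rw [setIntegral_indicator measurableSet_Iio, setIntegral_const, inter_comm, Iio_inter_Ioo,
      min_eq_left hDu.2, Real.volume_real_Ioo_of_le hDu.1, smul_eq_mul]
    ring
  calc (0 : ℝ) ≤ ∫ t in Ioo (-L) L, ∫ u in Ioo 0 1, g (t, u) :=
        integral_nonneg (setIntegral_indicator_lt_nonneg_of_monotoneOn hD htail)
    _ = ∫ u in Ioo 0 1, ∫ t in Ioo (-L) L, g (t, u) := integral_integral_swap hg
    _ = ∫ u in Ioo 0 1, ((∫ t in Ioo (-L) L, g (t, u)) - L * h u) := by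
        have hsplit := integral_sub hg.integral_prod_right (hh.const_mul L)
        rw [integral_const_mul, hmean, mul_zero, sub_zero] at hsplit
        exact hsplit.symm
    _ = ∫ u in Ioo 0 1, D u * h u := setIntegral_congr_fun measurableSet_Ioo hlayer

lemma setIntegral_comp_le_of_tail_le {S T : ℝ → ℝ} (hS : MonotoneOn S (Ioo 0 1))
    (hSi : IntegrableOn S (Ioo 0 1)) (hTi : IntegrableOn T (Ioo 0 1))
    (hmean : ∫ u in Ioo 0 1, S u = ∫ u in Ioo 0 1, T u)
    (htail : ∀ p ∈ Ioo (0 : ℝ) 1, ∫ u in Ioo p 1, S u ≤ ∫ u in Ioo p 1, T u)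
    {σ : ℝ → ℝ} {C : NNReal} (hσ : ConvexOn ℝ univ σ) (hσC : LipschitzWith C σ) :
    ∫ u in Ioo 0 1, σ (S u) ≤ ∫ u in Ioo 0 1, σ (T u) := by
  set D : ℝ → ℝ := fun u => derivWithin σ (Ioi (S u)) (S u)
  have hD : MonotoneOn D (Ioo 0 1) := fun a ha b hb hab =>
    hσ.monotoneOn_rightDeriv (by simp) (by simp) (hS ha hb hab)
  have hDC : ∀ u, |D u| ≤ C := fun u => hσ.abs_rightDeriv_le hσC (S u)
  have hDh : 0 ≤ ∫ u in Ioo 0 1, D u * (T u - S u) := by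
    refine setIntegral_mul_nonneg_of_monotoneOn hD (fun u _ => hDC u) (hTi.sub hSi) ?_ ?_
    · rw [integral_sub hTi hSi, hmean, sub_self]
    · rintro p ⟨hp0, hp1⟩
      rcases hp0.eq_or_lt with rfl | hp0
      · rw [integral_sub hTi hSi, hmean, sub_self]
      · rw [integral_sub (hTi.mono_set (Ioo_subset_Ioo_left hp0.le))
          (hSi.mono_set (Ioo_subset_Ioo_left hp0.le)), sub_nonneg]
        exact htail p ⟨hp0, hp1⟩
  have hσS := hσC.integrable_comp hSi
  have hσT := hσC.integrable_comp hTi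
  have hDm : AEStronglyMeasurable D (volume.restrict (Ioo 0 1)) :=
    (aemeasurable_restrict_of_monotoneOn measurableSet_Ioo hD).aestronglyMeasurable
  have hsupport : ∀ u, D u * (T u - S u) ≤ σ (T u) - σ (S u) := fun u => by
    linarith [hσ.add_rightDeriv_mul_sub_le (S u) (T u)]
  have hmono : ∫ u in Ioo 0 1, D u * (T u - S u) ≤ ∫ u in Ioo 0 1, (σ (T u) - σ (S u)) :=
    integral_mono ((hTi.sub hSi).bdd_mul hDm (ae_of_all _ fun u => hDC u)) (hσT.sub hσS) hsupport
  rw [integral_sub hσT hσS] at hmono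
  linarith

end Majorization

section LipschitzApproximation

variable {φ : ℝ → ℝ}

def supportLine (φ : ℝ → ℝ) (d x : ℝ) : ℝ := φ d + derivWithin φ (Ioi d) d * (x - d)

def supportLineMax (φ : ℝ → ℝ) : ℕ → ℝ → ℝ :=
  partialSups fun i => supportLine φ (TopologicalSpace.denseSeq ℝ i)

lemma convexOn_supportLine (d : ℝ) : ConvexOn ℝ univ (supportLine φ d) :=
  ⟨convex_univ, fun x _ y _ a b _ _ hab => le_of_eq <| by
    simp only [supportLine, smul_eq_mul]
    rw [← sub_eq_of_eq_add' hab.symm]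
    ring⟩

lemma lipschitzWith_supportLine (d : ℝ) :
    LipschitzWith ‖derivWithin φ (Ioi d) d‖₊ (supportLine φ d) :=
  LipschitzWith.of_dist_le_mul fun x y => by
    simp [supportLine, Real.dist_eq, ← mul_sub, abs_mul]

lemma convexOn_supportLineMax (k : ℕ) : ConvexOn ℝ univ (supportLineMax φ k) := by
  induction k with
  | zero => exact convexOn_supportLine _
  | succ k ih =>
    rw [supportLineMax, partialSups_add_one]
    exact ih.sup (convexOn_supportLine _)

lemma exists_lipschitzWith_supportLineMax (k : ℕ) : ∃ C, LipschitzWith C (supportLineMax φ k) := by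
  induction k with
  | zero => exact ⟨_, lipschitzWith_supportLine _⟩
  | succ k ih =>
    obtain ⟨C, hC⟩ := ih
    rw [supportLineMax, partialSups_add_one]
    exact ⟨_, hC.max (lipschitzWith_supportLine _)⟩

lemma monotone_supportLineMax : Monotone (supportLineMax φ) :=
  (partialSups _).monotone

lemma supportLineMax_le (hφ : ConvexOn ℝ univ φ) (k : ℕ) : supportLineMax φ k ≤ φ :=
  partialSups_le _ k φ fun _ _ x => hφ.add_rightDeriv_mul_sub_le _ x

lemma tendsto_supportLineMax (hφ : ConvexOn ℝ univ φ) (x : ℝ) :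
    Tendsto (fun k => supportLineMax φ k x) atTop (𝓝 (φ x)) := by
  refine tendsto_order.2 ⟨fun a ha => ?_, fun b hb =>
    Eventually.of_forall fun k => (supportLineMax_le hφ k x).trans_lt hb⟩
  -- for `d ∈ (x - 1, x)`, the support line at `d` is above `φ d + c * (x - d)` at `x`, and this
  -- tends to `φ x` as `d → x`
  set c := derivWithin φ (Ioi (x - 1)) (x - 1)
  have hg : Continuous fun d => φ d + c * (x - d) :=
    (continuousOn_univ.1 (hφ.continuousOn isOpen_univ)).add (by fun_prop)
  set U := Ioo (x - 1) x ∩ {d | a < φ d + c * (x - d)}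
  have hU : IsOpen U := isOpen_Ioo.inter (isOpen_lt continuous_const hg)
  have hUne : U.Nonempty := Filter.nonempty_of_mem (f := 𝓝[<] x) <| inter_mem
    (Ioo_mem_nhdsLT (by linarith)) (nhdsWithin_le_nhds <| hg.continuousAt.preimage_mem_nhds
      (Ioi_mem_nhds (by simpa using ha)))
  obtain ⟨i, hiU⟩ := (TopologicalSpace.denseRange_denseSeq ℝ).exists_mem_open hU hUne
  set d := TopologicalSpace.denseSeq ℝ i
  have hcd : c ≤ derivWithin φ (Ioi d) d :=
    hφ.monotoneOn_rightDeriv (by simp) (by simp) hiU.1.1.le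
  have hd : a < supportLine φ d x := hiU.2.trans_le <| by
    simp only [supportLine]
    nlinarith [hiU.1.2]
  exact eventually_atTop.2 ⟨i, fun k hk => hd.trans_le
    (le_partialSups_of_le (fun i => supportLine φ (TopologicalSpace.denseSeq ℝ i)) hk x)⟩

lemma convexOrder_of_forall_lipschitzWith {G K : Measure ℝ} [IsFiniteMeasure G]
    [IsFiniteMeasure K] (hG : Integrable id G) (hK : Integrable id K)
    (h : ∀ σ : ℝ → ℝ, ∀ C : NNReal, ConvexOn ℝ univ σ → LipschitzWith C σ →
      ∫ x, σ x ∂G ≤ ∫ x, σ x ∂K) :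
    ConvexOrder G K := by
  intro φ hφ hφG hφK
  have hσG (k : ℕ) : Integrable (supportLineMax φ k) G :=
    (exists_lipschitzWith_supportLineMax k).choose_spec.integrable_comp hG
  refine le_of_tendsto' (integral_tendsto_of_tendsto_of_monotone hσG hφG
    (ae_of_all _ fun x _ _ hkl => monotone_supportLineMax hkl x)
    (ae_of_all _ (tendsto_supportLineMax hφ))) fun k => ?_
  obtain ⟨C, hC⟩ := exists_lipschitzWith_supportLineMax (φ := φ) k
  calc ∫ x, supportLineMax φ k x ∂G ≤ ∫ x, supportLineMax φ k x ∂K :=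
        h _ C (convexOn_supportLineMax k) hC
    _ ≤ ∫ x, φ x ∂K := integral_mono (hC.integrable_comp hK) hφK (supportLineMax_le hφ k)

end LipschitzApproximation

lemma DoublyStochastic.sum_sum_mul {n : ℕ} {Λ : Matrix (Fin n) (Fin n) ℝ}
    (hΛ : DoublyStochastic Λ) (a : Fin n → ℝ) : ∑ i, ∑ j, Λ i j * a j = ∑ j, a j := by
  rw [Finset.sum_comm]
  simp only [← Finset.sum_mul, hΛ.2.2, one_mul]

section ComonotonicSum

variable {n : ℕ} {F : Fin n → Measure ℝ}

lemma monotoneOn_sum_quantile (hF : ∀ i, IsProbabilityMeasure (F i)) :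
    MonotoneOn (fun u => ∑ i, quantile (F i) u) (Ioo 0 1) := fun _ ha _ hb hab =>
  Finset.sum_le_sum fun i _ => by have := hF i; exact monotoneOn_quantile ha hb hab

lemma integrableOn_sum_quantile (hF : ∀ i, IsProbabilityMeasure (F i))
    (hFint : ∀ i, Integrable id (F i)) :
    IntegrableOn (fun u => ∑ i, quantile (F i) u) (Ioo 0 1) :=
  integrable_finsetSum _ fun i _ => by have := hF i; exact integrableOn_quantile (hFint i)

lemma aemeasurable_sum_quantile (hF : ∀ i, IsProbabilityMeasure (F i)) :
    AEMeasurable (fun u => ∑ i, quantile (F i) u) uniform01 :=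
  aemeasurable_restrict_of_monotoneOn measurableSet_Ioo (monotoneOn_sum_quantile hF)

lemma isProbabilityMeasure_comonoSum (hF : ∀ i, IsProbabilityMeasure (F i)) :
    IsProbabilityMeasure (comonoSum n F) :=
  Measure.isProbabilityMeasure_map (aemeasurable_sum_quantile hF)

lemma integrable_id_comonoSum (hF : ∀ i, IsProbabilityMeasure (F i))
    (hFint : ∀ i, Integrable id (F i)) : Integrable id (comonoSum n F) :=
  (integrable_map_measure aestronglyMeasurable_id (aemeasurable_sum_quantile hF)).2
    (integrableOn_sum_quantile hF hFint)

lemma integral_comonoSum (hF : ∀ i, IsProbabilityMeasure (F i)) {f : ℝ → ℝ}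
    (hf : Continuous f) :
    ∫ x, f x ∂(comonoSum n F) = ∫ u in Ioo 0 1, f (∑ i, quantile (F i) u) :=
  integral_map (aemeasurable_sum_quantile hF) hf.aestronglyMeasurable

variable {Λ : Matrix (Fin n) (Fin n) ℝ}

lemma isProbabilityMeasure_distMix (hΛ : DoublyStochastic Λ)
    (hF : ∀ i, IsProbabilityMeasure (F i)) (i : Fin n) : IsProbabilityMeasure (distMix Λ F i) :=
  isProbabilityMeasure_sum_smul (hΛ.1 i) (hΛ.2.1 i) hF

lemma integrable_distMix {f : ℝ → ℝ} (hf : ∀ j, Integrable f (F j)) (i : Fin n) :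
    Integrable f (distMix Λ F i) :=
  integrable_sum_smul hf

lemma setIntegral_Ioo_zero_one_sum_quantile_distMix (hΛ : DoublyStochastic Λ)
    (hF : ∀ i, IsProbabilityMeasure (F i)) (hFint : ∀ i, Integrable id (F i)) :
    ∫ u in Ioo 0 1, ∑ i, quantile (distMix Λ F i) u = ∫ u in Ioo 0 1, ∑ i, quantile (F i) u := by
  have hΛF := isProbabilityMeasure_distMix hΛ hF
  rw [integral_finsetSum _ fun i _ => integrableOn_quantile (integrable_distMix hFint i),
    integral_finsetSum _ fun i _ => by have := hF i; exact integrableOn_quantile (hFint i)]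
  calc ∑ i, ∫ u in Ioo 0 1, quantile (distMix Λ F i) u
      = ∑ i, ∑ j, Λ i j * ∫ x, x ∂(F j) := Finset.sum_congr rfl fun i _ => by
        rw [setIntegral_Ioo_zero_one_quantile]
        exact integral_sum_smul (hΛ.1 i) hFint
    _ = ∑ j, ∫ u in Ioo 0 1, quantile (F j) u := by
        rw [hΛ.sum_sum_mul]
        exact Finset.sum_congr rfl fun j _ => by
          have := hF j; exact setIntegral_Ioo_zero_one_quantile.symm

lemma setIntegral_Ioo_sum_quantile_le_distMix (hΛ : DoublyStochastic Λ)
    (hF : ∀ i, IsProbabilityMeasure (F i)) (hFint : ∀ i, Integrable id (F i)) {p : ℝ}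
    (hp : p ∈ Ioo 0 1) :
    ∫ u in Ioo p 1, ∑ i, quantile (F i) u ≤ ∫ u in Ioo p 1, ∑ i, quantile (distMix Λ F i) u := by
  have hsub : Ioo p 1 ⊆ Ioo 0 1 := Ioo_subset_Ioo_left hp.1.le
  have hΛF := isProbabilityMeasure_distMix hΛ hF
  rw [integral_finsetSum _ fun i _ =>
      (integrableOn_quantile (integrable_distMix hFint i)).mono_set hsub,
    integral_finsetSum _ fun i _ => by
      have := hF i; exact (integrableOn_quantile (hFint i)).mono_set hsub,
    ← hΛ.sum_sum_mul]
  exact Finset.sum_le_sum fun i _ =>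
    sum_mul_setIntegral_Ioo_quantile_le (hΛ.1 i) (hΛ.2.1 i) hF hFint hp

end ComonotonicSum

/-- Theorem 2.2: C(𝐅) ⊆ C(Λ𝐅). -/
theorem stmt3 (n : ℕ)
    (F : Fin n → Measure ℝ) (hF : ∀ i, IsProbabilityMeasure (F i))
    (hFint : ∀ i, Integrable id (F i))
    (Λ : Matrix (Fin n) (Fin n) ℝ) (hΛ : DoublyStochastic Λ)
    (G : Measure ℝ) (hG : IsProbabilityMeasure G) (hGint : Integrable id G)
    (hcx : ConvexOrder G (comonoSum n F)) :
    ConvexOrder G (comonoSum n (distMix Λ F)) := by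
  have hΛF := isProbabilityMeasure_distMix hΛ hF
  have hΛFint := integrable_distMix (Λ := Λ) hFint
  have := hG
  have := isProbabilityMeasure_comonoSum hF
  have := isProbabilityMeasure_comonoSum hΛF
  refine convexOrder_of_forall_lipschitzWith hGint (integrable_id_comonoSum hΛF hΛFint)
    fun σ C hσ hσC => ?_
  calc ∫ x, σ x ∂G ≤ ∫ x, σ x ∂(comonoSum n F) :=
        hcx σ hσ (hσC.integrable_comp hGint)
          (hσC.integrable_comp (integrable_id_comonoSum hF hFint))
    _ = ∫ u in Ioo 0 1, σ (∑ i, quantile (F i) u) := integral_comonoSum hF hσC.continuous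
    _ ≤ ∫ u in Ioo 0 1, σ (∑ i, quantile (distMix Λ F i) u) :=
        setIntegral_comp_le_of_tail_le (monotoneOn_sum_quantile hF)
          (integrableOn_sum_quantile hF hFint) (integrableOn_sum_quantile hΛF hΛFint)
          (setIntegral_Ioo_zero_one_sum_quantile_distMix hΛ hF hFint).symm
          (fun p hp => setIntegral_Ioo_sum_quantile_le_distMix hΛ hF hFint hp) hσ hσC
    _ = ∫ x, σ x ∂(comonoSum n (distMix Λ F)) := (integral_comonoSum hΛF hσC.continuous).symm

end
end

section
/- Let Λ be an n×n doubly stochastic matrix and 𝐅 = (F₁,…,Fₙ) an n-tuple of Borel probability measures on ℝ. The following are equivalent: (a) (Λ𝐅)ᵢ ≺_st Fᵢ for every i; (b) Fᵢ ≺_st (Λ𝐅)ᵢ for every i; (c) Λ𝐅 = 𝐅 (componentwise equality of measures). -/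
open MeasureTheory
open scoped ENNReal BigOperators

noncomputable section

/-! Column sums equal to one give `∑ i, (Λ𝐅)ᵢ (Iic x) = ∑ i, Fᵢ (Iic x)` for every `x`. A
one-sided pointwise comparison of two finite families with the same finite sum is an equality,
so the distribution functions, hence the measures, agree. -/

open Set Finset

theorem ENNReal.eq_of_sum_eq_sum_of_le {ι : Type*} {s : Finset ι} {f g : ι → ℝ≥0∞}
    (hle : ∀ i ∈ s, f i ≤ g i) (hsum : ∑ i ∈ s, f i = ∑ i ∈ s, g i)
    (hfin : ∑ i ∈ s, g i ≠ ∞) : ∀ i ∈ s, f i = g i := by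
  have hg : ∀ i ∈ s, g i ≠ ∞ := ENNReal.sum_ne_top.1 hfin
  have hf : ∀ i ∈ s, f i ≠ ∞ := fun i hi => ne_top_of_le_ne_top (hg i hi) (hle i hi)
  have hreal : ∀ i ∈ s, (f i).toReal = (g i).toReal :=
    (sum_eq_sum_iff_of_le fun i hi => ENNReal.toReal_mono (hg i hi) (hle i hi)).1
      (by rw [← ENNReal.toReal_sum hf, ← ENNReal.toReal_sum hg, hsum])
  exact fun i hi => (ENNReal.toReal_eq_toReal_iff' (hf i hi) (hg i hi)).1 (hreal i hi)

theorem StOrder.refl (μ : Measure ℝ) : StOrder μ μ := fun _ => le_rfl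

theorem StOrder.eq_of_sum_Iic_eq {ι : Type*} [Fintype ι] {μ ν : ι → Measure ℝ}
    [∀ i, IsFiniteMeasure (μ i)] (hst : ∀ i, StOrder (μ i) (ν i))
    (hsum : ∀ x, ∑ i, ν i (Iic x) = ∑ i, μ i (Iic x)) (i : ι) : μ i = ν i :=
  Measure.ext_of_Iic _ _ fun x =>
    (ENNReal.eq_of_sum_eq_sum_of_le (fun j _ => hst j x) (hsum x)
      (ENNReal.sum_ne_top.2 fun _ _ => measure_ne_top _ _) i (mem_univ i)).symm

section distMix

variable {n : ℕ} (F : Fin n → Measure ℝ)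

theorem distMix_apply (Λ : Matrix (Fin n) (Fin n) ℝ) (i : Fin n) (s : Set ℝ) :
    distMix Λ F i s = ∑ j, ENNReal.ofReal (Λ i j) * F j s := by
  simp only [distMix, Measure.finsetSum_apply, Measure.smul_apply, smul_eq_mul]

instance isFiniteMeasure_distMix [∀ j, IsFiniteMeasure (F j)] (Λ : Matrix (Fin n) (Fin n) ℝ)
    (i : Fin n) : IsFiniteMeasure (distMix Λ F i) := by
  have := fun j => (F j).smul_finite (ENNReal.ofReal_ne_top (r := Λ i j))
  unfold distMix
  infer_instance

theorem sum_distMix_apply {Λ : Matrix (Fin n) (Fin n) ℝ} (hΛ : ∀ i j, 0 ≤ Λ i j)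
    (hcol : ∀ j, ∑ i, Λ i j = 1) (s : Set ℝ) : ∑ i, distMix Λ F i s = ∑ i, F i s := by
  simp only [distMix_apply]
  rw [sum_comm]
  refine sum_congr rfl fun j _ => ?_
  rw [← sum_mul, ← ENNReal.ofReal_sum_of_nonneg fun i _ => hΛ i j, hcol j,
    ENNReal.ofReal_one, one_mul]

end distMix

/-- Proposition 4.2(i): stochastic-order comparisons with a distribution mixture
    force the mixture to be trivial. -/
theorem stmt8 (n : ℕ) (Λ : Matrix (Fin n) (Fin n) ℝ) (hΛ : DoublyStochastic Λ)
    (F : Fin n → Measure ℝ) (hF : ∀ i, IsProbabilityMeasure (F i)) :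
    ((∀ i, StOrder (distMix Λ F i) (F i)) ↔ (∀ i, distMix Λ F i = F i)) ∧
      ((∀ i, StOrder (F i) (distMix Λ F i)) ↔ (∀ i, distMix Λ F i = F i)) := by
  have hsum x := sum_distMix_apply F hΛ.1 hΛ.2.2 (Iic x)
  refine ⟨⟨fun h => StOrder.eq_of_sum_Iic_eq h fun x => (hsum x).symm, ?_⟩,
    ⟨fun h i => (StOrder.eq_of_sum_Iic_eq h hsum i).symm, ?_⟩⟩ <;>
  · intro h i
    rw [h i]
    exact StOrder.refl _
end
end
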